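/- Let U be an open neighborhood of the diagonal {(z,z)} in ℂ², and let F : U → ℂ be C^∞-smooth, bianalytic in the first variable z for each fixed w (i.e. ∂̄_z²F = 0) and bianalytic in conj(w) for each fixed z (i.e. ∂_w²F = 0). If there exists G : U → ℂ, bianalytic in z and C^∞-smooth in w, with F(z,w) = (z−w)² G(z,w) on U, then F ≡ 0 on a neighborhood of the diagonal. -/

import Mathlib

open Complex MeasureTheory Metric Real ComplexConjugate

noncomputable section

/-- The Wirtinger derivative `∂̄f = (1/2)(∂ₓf + i ∂_y f)`. -/
def dbar (f : ℂ → ℂ) (z : ℂ) : ℂ :=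
  (1 / 2 : ℂ) * (fderiv ℝ f z 1 + Complex.I * fderiv ℝ f z Complex.I)

/-- The Wirtinger derivative `∂f = (1/2)(∂ₓf − i ∂_y f)`. -/
def pdz (f : ℂ → ℂ) (z : ℂ) : ℂ :=
  (1 / 2 : ℂ) * (fderiv ℝ f z 1 - Complex.I * fderiv ℝ f z Complex.I)

/-- The normalized Laplacian `Δ̂ = (1/4)(∂²ₓ + ∂²_y)` of a real-valued function on `ℂ`. -/
def lap (Q : ℂ → ℝ) (z : ℂ) : ℝ :=
  (1 / 4 : ℝ) * (fderiv ℝ (fun w => fderiv ℝ Q w 1) z 1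
    + fderiv ℝ (fun w => fderiv ℝ Q w Complex.I) z Complex.I)

/-- Subharmonicity on a set: upper semicontinuity together with the sub-mean-value
property on every closed disk contained in the set. -/
def SubhOn (ψ : ℂ → ℝ) (Ω : Set ℂ) : Prop :=
  UpperSemicontinuousOn ψ Ω ∧
  ∀ z ∈ Ω, ∀ r : ℝ, 0 < r → closedBall z r ⊆ Ω →
    IntervalIntegrable (fun t : ℝ => ψ (z + (r : ℂ) * Complex.exp ((t : ℂ) * Complex.I)))
        volume 0 (2 * π) ∧
    ψ z ≤ (1 / (2 * π)) * ∫ t in (0:ℝ)..(2 * π),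
        ψ (z + (r : ℂ) * Complex.exp ((t : ℂ) * Complex.I))

/-- Bianalyticity (`∂̄²u = 0`) on a set, in the sense of distributions. -/
def BianalyticOn (u : ℂ → ℂ) (Ω : Set ℂ) : Prop :=
  ContinuousOn u Ω ∧
  ∀ φ : ℂ → ℂ, ContDiff ℝ (⊤ : ℕ∞) φ → HasCompactSupport φ → tsupport φ ⊆ Ω →
    ∫ z in Ω, u z * dbar (dbar φ) z = 0

/-!
Write `B = ∂̄_z F` and `A = F - z̄ B`. Both are holomorphic in `z`, and since `∂_w z̄ = 0`,
`0 = ∂_w² F = ∂_w² A + z̄ ∂_w² B`; applying `∂̄_z` (which commutes with `∂_w`) gives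
`∂_w² B = 0`, hence `∂_w² A = 0`. The factor `(z - w)²` makes `A`, `B` and their first
derivatives vanish on the diagonal.

For such a `u` (holomorphic in `z`, `∂_w² u = 0`, vanishing to first order on the diagonal),
`∂_w u` is holomorphic in `z`, antiholomorphic in `w` and zero on the diagonal. A function
holomorphic in `z` and antiholomorphic in `w` on a convex bidisk `D × D` that vanishes on its
diagonal vanishes identically: for `m = (z + w)/2`, `β = (z - w)/(2i)`, the function
`s ↦ u (m + β s, m + β s̄)` is holomorphic, zero for real `s`, and equals `u (z, w)` at `s = i`.
So first `∂_w u = 0`, then `u = 0`; thus `A = B = 0` and `F = A + z̄ B = 0`.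
-/

open Filter Topology

section Wirtinger

variable {E : Type*} [NormedAddCommGroup E] [NormedSpace ℝ E]

def wirtDeriv (a b : E) (u : E → ℂ) (x : E) : ℂ :=
  (1 / 2 : ℂ) * (fderiv ℝ u x a + I * fderiv ℝ u x b)

variable {a b : E} {u v : E → ℂ} {x : E} {s : Set E}

lemma Filter.EventuallyEq.wirtDeriv_eq (h : u =ᶠ[𝓝 x] v) :
    wirtDeriv a b u x = wirtDeriv a b v x := by
  simp only [wirtDeriv, h.fderiv_eq]

lemma HasFDerivAt.wirtDeriv_eq {L : E →L[ℝ] ℂ} (h : HasFDerivAt u L x) :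
    wirtDeriv a b u x = (1 / 2 : ℂ) * (L a + I * L b) := by
  rw [wirtDeriv, h.fderiv]

lemma wirtDeriv_add (hu : DifferentiableAt ℝ u x) (hv : DifferentiableAt ℝ v x) :
    wirtDeriv a b (fun y => u y + v y) x = wirtDeriv a b u x + wirtDeriv a b v x := by
  simp only [wirtDeriv, fderiv_fun_add hu hv, add_apply]
  ring

lemma wirtDeriv_sub (hu : DifferentiableAt ℝ u x) (hv : DifferentiableAt ℝ v x) :
    wirtDeriv a b (fun y => u y - v y) x = wirtDeriv a b u x - wirtDeriv a b v x := by
  simp only [wirtDeriv, fderiv_fun_sub hu hv, sub_apply]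
  ring

lemma wirtDeriv_mul (hu : DifferentiableAt ℝ u x) (hv : DifferentiableAt ℝ v x) :
    wirtDeriv a b (fun y => u y * v y) x = u x * wirtDeriv a b v x + v x * wirtDeriv a b u x := by
  simp only [wirtDeriv, fderiv_fun_mul hu hv, add_apply, smul_apply, smul_eq_mul]
  ring

lemma ContDiffOn.wirtDeriv {m n : WithTop ℕ∞} (hu : ContDiffOn ℝ n u s) (hs : IsOpen s)
    (hmn : m + 1 ≤ n) : ContDiffOn ℝ m (wirtDeriv a b u) s :=
  contDiffOn_const.mul (((hu.fderiv_of_isOpen hs hmn).clm_apply contDiffOn_const).add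
    (contDiffOn_const.mul ((hu.fderiv_of_isOpen hs hmn).clm_apply contDiffOn_const)))

lemma wirtDeriv_wirtDeriv_eq (hu : ContDiffAt ℝ 2 u x) (c d : E) :
    wirtDeriv a b (wirtDeriv c d u) x = (1 / 4 : ℂ) * (fderiv ℝ (fderiv ℝ u) x a c
      + I * fderiv ℝ (fderiv ℝ u) x a d + I * fderiv ℝ (fderiv ℝ u) x b c
      - fderiv ℝ (fderiv ℝ u) x b d) := by
  have hd : HasFDerivAt (fderiv ℝ u) (fderiv ℝ (fderiv ℝ u) x) x :=
    ((hu.fderiv_right (m := 1) le_rfl).differentiableAt one_ne_zero).hasFDerivAt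
  have happ : ∀ e, HasFDerivAt (fun y => fderiv ℝ u y e)
      ((ContinuousLinearMap.apply ℝ ℂ e).comp (fderiv ℝ (fderiv ℝ u) x)) x :=
    fun e => (ContinuousLinearMap.apply ℝ ℂ e).hasFDerivAt.comp x hd
  have hw : HasFDerivAt (wirtDeriv c d u) _ x :=
    ((happ c).add ((happ d).const_mul I)).const_mul (1 / 2 : ℂ)
  rw [hw.wirtDeriv_eq]
  simp
  linear_combination (fderiv ℝ (fderiv ℝ u) x b d / 4) * I_sq

lemma wirtDeriv_wirtDeriv_comm (hu : ContDiffAt ℝ 2 u x) (c d : E) :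
    wirtDeriv a b (wirtDeriv c d u) x = wirtDeriv c d (wirtDeriv a b u) x := by
  have hsymm := hu.isSymmSndFDerivAt (by simp)
  rw [wirtDeriv_wirtDeriv_eq hu, wirtDeriv_wirtDeriv_eq hu, hsymm a c, hsymm a d, hsymm b c,
    hsymm b d]
  ring

lemma wirtDeriv_wirtDeriv_eq_zero (hs : IsOpen s) (hu : ContDiffOn ℝ 2 u s)
    (h : ∀ y ∈ s, wirtDeriv a b u y = 0) (c d : E) :
    ∀ y ∈ s, wirtDeriv a b (wirtDeriv c d u) y = 0 := by
  intro y hy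
  have hzero : wirtDeriv a b u =ᶠ[𝓝 y] fun _ => 0 := eventually_of_mem (hs.mem_nhds hy) h
  rw [wirtDeriv_wirtDeriv_comm (hu.contDiffAt (hs.mem_nhds hy)), hzero.wirtDeriv_eq]
  simp [wirtDeriv]

end Wirtinger

-- `∂̄_z` and `∂_w` on functions of `(z, w)`; note `-i ∂_{(0,i)} = i ∂_{(0,-i)}`.
notation "∂̄₁" => wirtDeriv ((1 : ℂ), (0 : ℂ)) (I, (0 : ℂ))

notation "∂₂" => wirtDeriv ((0 : ℂ), (1 : ℂ)) ((0 : ℂ), -I)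

section Slices

variable {u : ℂ × ℂ → ℂ} {z w : ℂ}

lemma dbar_comp_mk_left (hu : DifferentiableAt ℝ u (z, w)) :
    dbar (fun ζ => u (ζ, w)) z = ∂̄₁ u (z, w) := by
  have hslice : HasFDerivAt (fun ζ => u (ζ, w)) ((fderiv ℝ u (z, w)).comp (.inl ℝ ℂ ℂ)) z :=
    hu.hasFDerivAt.comp z (hasFDerivAt_prodMk_left z w)
  rw [dbar, hslice.fderiv]
  rfl

lemma pdz_comp_mk_right (hu : DifferentiableAt ℝ u (z, w)) :
    pdz (fun η => u (z, η)) w = ∂₂ u (z, w) := by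
  have hslice : HasFDerivAt (fun η => u (z, η)) ((fderiv ℝ u (z, w)).comp (.inr ℝ ℂ ℂ)) w :=
    hu.hasFDerivAt.comp w (hasFDerivAt_prodMk_right z w)
  rw [pdz, hslice.fderiv, wirtDeriv, show ((0 : ℂ), -I) = -(0, I) by simp, map_neg]
  simp
  ring

variable {Ω : Set (ℂ × ℂ)}

lemma dbar_dbar_comp_mk_left (hΩ : IsOpen Ω) (hu : ContDiffOn ℝ 2 u Ω) (h : (z, w) ∈ Ω) :
    dbar (fun ζ => dbar (fun ξ => u (ξ, w)) ζ) z = ∂̄₁ (∂̄₁ u) (z, w) := by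
  have hslice : {ζ | (ζ, w) ∈ Ω} ∈ 𝓝 z :=
    (hΩ.preimage (continuous_id.prodMk continuous_const)).mem_nhds h
  have heq : (fun ζ => dbar (fun ξ => u (ξ, w)) ζ) =ᶠ[𝓝 z] fun ζ => ∂̄₁ u (ζ, w) :=
    eventually_of_mem hslice fun ζ hζ =>
      dbar_comp_mk_left ((hu.differentiableOn two_ne_zero).differentiableAt (hΩ.mem_nhds hζ))
  rw [dbar, heq.fderiv_eq, ← dbar, dbar_comp_mk_left]
  exact ((hu.wirtDeriv hΩ le_rfl).differentiableOn one_ne_zero).differentiableAt (hΩ.mem_nhds h)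

lemma pdz_pdz_comp_mk_right (hΩ : IsOpen Ω) (hu : ContDiffOn ℝ 2 u Ω) (h : (z, w) ∈ Ω) :
    pdz (fun η => pdz (fun ξ => u (z, ξ)) η) w = ∂₂ (∂₂ u) (z, w) := by
  have hslice : {η | (z, η) ∈ Ω} ∈ 𝓝 w :=
    (hΩ.preimage (continuous_const.prodMk continuous_id)).mem_nhds h
  have heq : (fun η => pdz (fun ξ => u (z, ξ)) η) =ᶠ[𝓝 w] fun η => ∂₂ u (z, η) :=
    eventually_of_mem hslice fun η hη =>
      pdz_comp_mk_right ((hu.differentiableOn two_ne_zero).differentiableAt (hΩ.mem_nhds hη))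
  rw [pdz, heq.fderiv_eq, ← pdz, pdz_comp_mk_right]
  exact ((hu.wirtDeriv hΩ le_rfl).differentiableOn one_ne_zero).differentiableAt (hΩ.mem_nhds h)

end Slices

section Holomorphy

variable {u : ℂ × ℂ → ℂ} {p : ℂ × ℂ}

lemma fderiv_apply_inl_of_dbarFst_eq_zero (h : ∂̄₁ u p = 0) (a : ℂ) :
    fderiv ℝ u p (a, 0) = a * fderiv ℝ u p (1, 0) := by
  have hdecomp : ((a, 0) : ℂ × ℂ) = a.re • ((1 : ℂ), (0 : ℂ)) + a.im • (I, 0) := by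
    ext <;> simp
  rw [hdecomp, map_add, map_smul, map_smul]
  simp only [wirtDeriv] at h
  conv_rhs => rw [← Complex.re_add_im a]
  simp only [Complex.real_smul]
  linear_combination (-2 * a.im * I) * h + (a.im * fderiv ℝ u p (I, 0)) * I_sq

lemma fderiv_apply_inr_of_pdSnd_eq_zero (h : ∂₂ u p = 0) (b : ℂ) :
    fderiv ℝ u p (0, b) = conj b * fderiv ℝ u p (0, 1) := by
  have hdecomp : ((0, b) : ℂ × ℂ) = b.re • ((0 : ℂ), (1 : ℂ)) - b.im • (0, -I) := by
    ext <;> simp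
  rw [hdecomp, map_sub, map_smul, map_smul]
  simp only [wirtDeriv] at h
  conv_rhs => rw [← Complex.re_add_im b]
  simp only [Complex.real_smul, map_add, map_mul, Complex.conj_ofReal, Complex.conj_I]
  linear_combination (2 * b.im * I) * h - (b.im * fderiv ℝ u p (0, -I)) * I_sq

lemma fderiv_apply_mul_conj (hz : ∂̄₁ u p = 0) (hw : ∂₂ u p = 0) (β v : ℂ) :
    fderiv ℝ u p (β * v, β * conj v)
      = v * (β * fderiv ℝ u p (1, 0) + conj β * fderiv ℝ u p (0, 1)) := by
  rw [show ((β * v, β * conj v) : ℂ × ℂ) = (β * v, 0) + (0, β * conj v) by simp, map_add,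
    fderiv_apply_inl_of_dbarFst_eq_zero hz, fderiv_apply_inr_of_pdSnd_eq_zero hw]
  simp
  ring

end Holomorphy

theorem eq_zero_on_prod_of_eq_zero_on_diag {u : ℂ × ℂ → ℂ} {D : Set ℂ} (hD : IsOpen D)
    (hDc : Convex ℝ D) (hu : DifferentiableOn ℝ u (D ×ˢ D))
    (hz : ∀ p ∈ D ×ˢ D, ∂̄₁ u p = 0) (hw : ∀ p ∈ D ×ˢ D, ∂₂ u p = 0)
    (hdiag : ∀ x ∈ D, u (x, x) = 0) :
    ∀ p ∈ D ×ˢ D, u p = 0 := by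
  rintro ⟨z, w⟩ hp
  set m := (z + w) / 2
  set β := (z - w) / (2 * I)
  set ℓ : ℂ →L[ℝ] ℂ × ℂ :=
    (β • (1 : ℂ →L[ℝ] ℂ)).prod (β • Complex.conjCLE.toContinuousLinearMap)
  have hℓ : ∀ s, ℓ s = (β * s, β * conj s) := fun s => rfl
  set γ : ℂ → ℂ × ℂ := fun s => (m, m) + ℓ s
  set S := γ ⁻¹' (D ×ˢ D)
  have hSo : IsOpen S := (hD.prod hD).preimage (by fun_prop)
  have hSc : Convex ℝ S :=
    ((hDc.prod hDc).translate_preimage_right (m, m)).linear_preimage ℓ.toLinearMap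
  have hholo : DifferentiableOn ℂ (u ∘ γ) S := by
    intro s hs
    have hreal : HasFDerivAt (u ∘ γ) ((fderiv ℝ u (γ s)).comp ℓ) s :=
      (hu.differentiableAt ((hD.prod hD).mem_nhds hs)).hasFDerivAt.comp s
        (ℓ.hasFDerivAt.const_add (m, m))
    refine (hasFDerivAt_of_restrictScalars ℝ hreal (f' := (1 : ℂ →L[ℂ] ℂ).smulRight
      (β * fderiv ℝ u (γ s) (1, 0) + conj β * fderiv ℝ u (γ s) (0, 1))) ?_)
      |>.differentiableAt.differentiableWithinAt
    ext v
    simp [hℓ, fderiv_apply_mul_conj (hz _ hs) (hw _ hs)]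
  have hm : m ∈ D := by
    convert hDc hp.1 hp.2 (by norm_num : (0 : ℝ) ≤ 1 / 2) (by norm_num : (0 : ℝ) ≤ 1 / 2)
      (by norm_num) using 1
    simp [m, Complex.real_smul]
    ring
  have h0 : (0 : ℂ) ∈ S := by simpa [S, γ, hℓ] using hm
  have hreal_zero : ∃ᶠ s in 𝓝[≠] (0 : ℂ), (u ∘ γ) s = 0 := by
    have hofReal : Tendsto ((↑) : ℝ → ℂ) (𝓝[≠] 0) (𝓝[≠] 0) :=
      continuous_ofReal.continuousWithinAt.tendsto_nhdsWithin fun _ _ ↦ by simp_all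
    have hnear : ∀ᶠ t : ℝ in 𝓝[≠] 0, (t : ℂ) ∈ S :=
      hofReal.eventually (eventually_nhdsWithin_of_eventually_nhds (hSo.mem_nhds h0))
    refine hofReal.frequently (hnear.mono fun t ht => ?_).frequently
    have hγt : γ t = (m + β * t, m + β * t) := by simp [γ, hℓ]
    simp only [S, Set.mem_preimage, hγt] at ht
    simpa [hγt] using hdiag _ ht.1
  have hI : γ I = (z, w) := by
    ext <;> simp [γ, hℓ, m, β] <;> field_simp <;> ring
  have := (hholo.analyticOnNhd hSo).eqOn_zero_of_preconnected_of_frequently_eq_zero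
    hSc.isPreconnected h0 hreal_zero (show I ∈ S by simpa [S, hI] using hp)
  simpa [hI] using this

theorem eq_zero_on_prod_of_pdSnd_pdSnd_eq_zero {u : ℂ × ℂ → ℂ} {D : Set ℂ} (hD : IsOpen D)
    (hDc : Convex ℝ D) (hu : ContDiffOn ℝ 2 u (D ×ˢ D))
    (hz : ∀ p ∈ D ×ˢ D, ∂̄₁ u p = 0) (hw : ∀ p ∈ D ×ˢ D, ∂₂ (∂₂ u) p = 0)
    (h0 : ∀ x ∈ D, u (x, x) = 0) (h1 : ∀ x ∈ D, HasFDerivAt (𝕜 := ℝ) u 0 (x, x)) :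
    ∀ p ∈ D ×ˢ D, u p = 0 := by
  have hΩ := hD.prod hD
  have hwu : ∀ p ∈ D ×ˢ D, ∂₂ u p = 0 :=
    eq_zero_on_prod_of_eq_zero_on_diag hD hDc
      ((hu.wirtDeriv hΩ le_rfl).differentiableOn one_ne_zero)
      (wirtDeriv_wirtDeriv_eq_zero hΩ hu hz _ _) hw fun x hx => by simp [(h1 x hx).wirtDeriv_eq]
  exact eq_zero_on_prod_of_eq_zero_on_diag hD hDc (hu.differentiableOn two_ne_zero) hz hwu h0

section ProductRules

variable {Ω : Set (ℂ × ℂ)} {v : ℂ × ℂ → ℂ} {p : ℂ × ℂ}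

lemma hasFDerivAt_conj_fst (p : ℂ × ℂ) :
    HasFDerivAt (fun q : ℂ × ℂ => conj q.1)
      (Complex.conjCLE.toContinuousLinearMap.comp (.fst ℝ ℂ ℂ)) p :=
  (Complex.conjCLE.toContinuousLinearMap.comp (.fst ℝ ℂ ℂ)).hasFDerivAt

lemma contDiffOn_conj_fst {n : WithTop ℕ∞} : ContDiffOn ℝ n (fun q : ℂ × ℂ => conj q.1) Ω :=
  (Complex.conjCLE.toContinuousLinearMap.comp (.fst ℝ ℂ ℂ)).contDiff.contDiffOn

lemma dbarFst_conj_fst_mul (hv : DifferentiableAt ℝ v p) :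
    ∂̄₁ (fun q => conj q.1 * v q) p = conj p.1 * ∂̄₁ v p + v p := by
  rw [wirtDeriv_mul (hasFDerivAt_conj_fst p).differentiableAt hv,
    (hasFDerivAt_conj_fst p).wirtDeriv_eq]
  simp
  ring

lemma pdSnd_conj_fst_mul (hv : DifferentiableAt ℝ v p) :
    ∂₂ (fun q => conj q.1 * v q) p = conj p.1 * ∂₂ v p := by
  rw [wirtDeriv_mul (hasFDerivAt_conj_fst p).differentiableAt hv,
    (hasFDerivAt_conj_fst p).wirtDeriv_eq]
  simp

lemma dbarFst_eq_sub_sq_mul (hΩ : IsOpen Ω) (hv : DifferentiableOn ℝ v Ω) {u : ℂ × ℂ → ℂ}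
    (hu : ∀ q ∈ Ω, u q = (q.1 - q.2) ^ 2 * v q) :
    ∀ q ∈ Ω, ∂̄₁ u q = (q.1 - q.2) ^ 2 * ∂̄₁ v q := by
  intro q hq
  have hsq := ((hasFDerivAt_fst (p := q) (𝕜 := ℝ)).fun_sub hasFDerivAt_snd).pow 2
  have heq : u =ᶠ[𝓝 q] fun q => (q.1 - q.2) ^ 2 * v q := eventually_of_mem (hΩ.mem_nhds hq) hu
  rw [heq.wirtDeriv_eq, wirtDeriv_mul hsq.differentiableAt (hv.differentiableAt (hΩ.mem_nhds hq)),
    hsq.wirtDeriv_eq]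
  simp only [smul_apply, sub_apply, ContinuousLinearMap.coe_fst', ContinuousLinearMap.coe_snd',
    smul_eq_mul]
  linear_combination (v q * (q.1 - q.2)) * I_sq

lemma hasFDerivAt_zero_of_eq_sub_sq_mul (hΩ : IsOpen Ω) (hv : DifferentiableOn ℝ v Ω)
    {u : ℂ × ℂ → ℂ} (hu : ∀ q ∈ Ω, u q = (q.1 - q.2) ^ 2 * v q) {x : ℂ} (hx : (x, x) ∈ Ω) :
    HasFDerivAt (𝕜 := ℝ) u 0 (x, x) := by
  have hsq := ((hasFDerivAt_fst (p := (x, x)) (𝕜 := ℝ)).fun_sub hasFDerivAt_snd).pow 2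
  refine ((hsq.fun_mul (hv.differentiableAt (hΩ.mem_nhds hx)).hasFDerivAt).congr_fderiv ?_)
    |>.congr_of_eventuallyEq (eventually_of_mem (hΩ.mem_nhds hx) hu)
  ext w <;> simp

end ProductRules

section HolomorphicDecomposition

variable {Ω : Set (ℂ × ℂ)} {a b F : ℂ × ℂ → ℂ}

lemma eq_zero_of_add_conj_fst_mul_eq_zero (hΩ : IsOpen Ω) (ha : DifferentiableOn ℝ a Ω)
    (hb : DifferentiableOn ℝ b Ω) (haz : ∀ p ∈ Ω, ∂̄₁ a p = 0) (hbz : ∀ p ∈ Ω, ∂̄₁ b p = 0)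
    (h : ∀ p ∈ Ω, a p + conj p.1 * b p = 0) : ∀ p ∈ Ω, b p = 0 := by
  intro p hp
  have hbp := hb.differentiableAt (hΩ.mem_nhds hp)
  have hzero : (fun q => a q + conj q.1 * b q) =ᶠ[𝓝 p] fun _ => 0 :=
    eventually_of_mem (hΩ.mem_nhds hp) h
  have := hzero.wirtDeriv_eq (a := ((1 : ℂ), (0 : ℂ))) (b := (I, (0 : ℂ)))
  rw [wirtDeriv_add (ha.differentiableAt (hΩ.mem_nhds hp))
    ((hasFDerivAt_conj_fst p).differentiableAt.fun_mul hbp), dbarFst_conj_fst_mul hbp,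
    haz p hp, hbz p hp] at this
  simpa [wirtDeriv] using this

lemma pdSnd_eq_add_conj_fst_mul (hΩ : IsOpen Ω) (ha : DifferentiableOn ℝ a Ω)
    (hb : DifferentiableOn ℝ b Ω) {f : ℂ × ℂ → ℂ} (h : ∀ p ∈ Ω, f p = a p + conj p.1 * b p) :
    ∀ p ∈ Ω, ∂₂ f p = ∂₂ a p + conj p.1 * ∂₂ b p := by
  intro p hp
  have hbp := hb.differentiableAt (hΩ.mem_nhds hp)
  have heq : f =ᶠ[𝓝 p] fun q => a q + conj q.1 * b q := eventually_of_mem (hΩ.mem_nhds hp) h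
  rw [heq.wirtDeriv_eq, wirtDeriv_add (ha.differentiableAt (hΩ.mem_nhds hp))
    ((hasFDerivAt_conj_fst p).differentiableAt.fun_mul hbp), pdSnd_conj_fst_mul hbp]

def holPart (F : ℂ × ℂ → ℂ) (q : ℂ × ℂ) : ℂ := F q - conj q.1 * ∂̄₁ F q

lemma ContDiffOn.holPart {m n : WithTop ℕ∞} (hF : ContDiffOn ℝ n F Ω) (hΩ : IsOpen Ω)
    (hmn : m + 1 ≤ n) : ContDiffOn ℝ m (holPart F) Ω :=
  (hF.of_le (le_self_add.trans hmn)).sub (contDiffOn_conj_fst.mul (hF.wirtDeriv hΩ hmn))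

lemma dbarFst_holPart (hΩ : IsOpen Ω) (hF : ContDiffOn ℝ 2 F Ω)
    (hFz : ∀ p ∈ Ω, ∂̄₁ (∂̄₁ F) p = 0) : ∀ p ∈ Ω, ∂̄₁ (holPart F) p = 0 := by
  intro p hp
  have hB : DifferentiableAt ℝ (∂̄₁ F) p :=
    ((hF.wirtDeriv hΩ le_rfl).differentiableOn one_ne_zero).differentiableAt (hΩ.mem_nhds hp)
  unfold holPart
  rw [wirtDeriv_sub ((hF.differentiableOn two_ne_zero).differentiableAt (hΩ.mem_nhds hp))
    ((hasFDerivAt_conj_fst p).differentiableAt.fun_mul hB), dbarFst_conj_fst_mul hB, hFz p hp]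
  ring

lemma pdSnd_pdSnd_eq_holPart_add (hΩ : IsOpen Ω) (hF : ContDiffOn ℝ 3 F Ω) :
    ∀ p ∈ Ω, ∂₂ (∂₂ F) p = ∂₂ (∂₂ (holPart F)) p + conj p.1 * ∂₂ (∂₂ (∂̄₁ F)) p := by
  have hA : ContDiffOn ℝ 2 (holPart F) Ω := hF.holPart hΩ le_rfl
  have hB : ContDiffOn ℝ 2 (∂̄₁ F) Ω := hF.wirtDeriv hΩ le_rfl
  refine pdSnd_eq_add_conj_fst_mul hΩ
    ((hA.wirtDeriv hΩ le_rfl).differentiableOn one_ne_zero)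
    ((hB.wirtDeriv hΩ le_rfl).differentiableOn one_ne_zero)
    (pdSnd_eq_add_conj_fst_mul hΩ (hA.differentiableOn two_ne_zero)
      (hB.differentiableOn two_ne_zero) fun p _ => ?_)
  simp [holPart]

lemma pdSnd_pdSnd_dbarFst_eq_zero (hΩ : IsOpen Ω) (hF : ContDiffOn ℝ 4 F Ω)
    (hFz : ∀ p ∈ Ω, ∂̄₁ (∂̄₁ F) p = 0) (hFw : ∀ p ∈ Ω, ∂₂ (∂₂ F) p = 0) :
    ∀ p ∈ Ω, ∂₂ (∂₂ (∂̄₁ F)) p = 0 := by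
  have hA : ContDiffOn ℝ 3 (holPart F) Ω := hF.holPart hΩ le_rfl
  have hB : ContDiffOn ℝ 3 (∂̄₁ F) Ω := hF.wirtDeriv hΩ le_rfl
  have hA' : ContDiffOn ℝ 2 (∂₂ (holPart F)) Ω := hA.wirtDeriv hΩ le_rfl
  have hB' : ContDiffOn ℝ 2 (∂₂ (∂̄₁ F)) Ω := hB.wirtDeriv hΩ le_rfl
  have hAz : ∀ p ∈ Ω, ∂̄₁ (∂₂ (∂₂ (holPart F))) p = 0 :=
    wirtDeriv_wirtDeriv_eq_zero hΩ hA' (wirtDeriv_wirtDeriv_eq_zero hΩ (hA.of_le (by norm_num))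
      (dbarFst_holPart hΩ (hF.of_le (by norm_num)) hFz) _ _) _ _
  have hBz : ∀ p ∈ Ω, ∂̄₁ (∂₂ (∂₂ (∂̄₁ F))) p = 0 :=
    wirtDeriv_wirtDeriv_eq_zero hΩ hB'
      (wirtDeriv_wirtDeriv_eq_zero hΩ (hB.of_le (by norm_num)) hFz _ _) _ _
  refine eq_zero_of_add_conj_fst_mul_eq_zero hΩ
    ((hA'.wirtDeriv hΩ le_rfl).differentiableOn one_ne_zero)
    ((hB'.wirtDeriv hΩ le_rfl).differentiableOn one_ne_zero) hAz hBz fun p hp => ?_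
  rw [← pdSnd_pdSnd_eq_holPart_add hΩ (hF.of_le (by norm_num)) p hp, hFw p hp]

lemma hasFDerivAt_holPart_zero {p : ℂ × ℂ} (hF : HasFDerivAt (𝕜 := ℝ) F 0 p)
    (hB : HasFDerivAt (𝕜 := ℝ) (∂̄₁ F) 0 p) (hB0 : ∂̄₁ F p = 0) :
    HasFDerivAt (𝕜 := ℝ) (holPart F) 0 p := by
  refine (hF.fun_sub ((hasFDerivAt_conj_fst p).fun_mul hB)).congr_fderiv ?_
  ext w <;> simp [hB0]

end HolomorphicDecomposition

theorem eq_zero_on_prod_of_eq_sub_sq_mul {F G : ℂ × ℂ → ℂ} {D : Set ℂ} (hD : IsOpen D)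
    (hDc : Convex ℝ D) (hF : ContDiffOn ℝ 4 F (D ×ˢ D)) (hG : ContDiffOn ℝ 2 G (D ×ˢ D))
    (hFz : ∀ p ∈ D ×ˢ D, ∂̄₁ (∂̄₁ F) p = 0) (hFw : ∀ p ∈ D ×ˢ D, ∂₂ (∂₂ F) p = 0)
    (hFG : ∀ p ∈ D ×ˢ D, F p = (p.1 - p.2) ^ 2 * G p) :
    ∀ p ∈ D ×ˢ D, F p = 0 := by
  have hΩ : IsOpen (D ×ˢ D) := hD.prod hD
  have hxx : ∀ x ∈ D, (x, x) ∈ D ×ˢ D := fun x hx => ⟨hx, hx⟩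
  have hGd := hG.differentiableOn two_ne_zero
  have hBG := dbarFst_eq_sub_sq_mul hΩ hGd hFG
  have hF1 : ∀ x ∈ D, HasFDerivAt (𝕜 := ℝ) F 0 (x, x) := fun x hx =>
    hasFDerivAt_zero_of_eq_sub_sq_mul hΩ hGd hFG (hxx x hx)
  have hB1 : ∀ x ∈ D, HasFDerivAt (𝕜 := ℝ) (∂̄₁ F) 0 (x, x) := fun x hx =>
    hasFDerivAt_zero_of_eq_sub_sq_mul hΩ
      ((hG.wirtDeriv hΩ le_rfl).differentiableOn one_ne_zero) hBG (hxx x hx)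
  have hB0 : ∀ x ∈ D, ∂̄₁ F (x, x) = 0 := fun x hx => by simp [hBG (x, x) (hxx x hx)]
  have hBw := pdSnd_pdSnd_dbarFst_eq_zero hΩ hF hFz hFw
  have hB := eq_zero_on_prod_of_pdSnd_pdSnd_eq_zero hD hDc (hF.wirtDeriv hΩ (by norm_num))
    hFz hBw hB0 hB1
  have hAw : ∀ p ∈ D ×ˢ D, ∂₂ (∂₂ (holPart F)) p = 0 := fun p hp => by
    simpa [hBw p hp, hFw p hp] using
      (pdSnd_pdSnd_eq_holPart_add hΩ (hF.of_le (by norm_num)) p hp).symm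
  have hA := eq_zero_on_prod_of_pdSnd_pdSnd_eq_zero hD hDc (hF.holPart hΩ (by norm_num))
    (dbarFst_holPart hΩ (hF.of_le (by norm_num)) hFz) hAw
    (fun x hx => by simp [holPart, hFG (x, x) (hxx x hx), hB0 x hx])
    (fun x hx => hasFDerivAt_holPart_zero (hF1 x hx) (hB1 x hx) (hB0 x hx))
  intro p hp
  simpa [holPart, hB p hp] using hA p hp

/-- local uniqueness for doubly bianalytic kernels, Lemma 7.4: if `F` is
smooth on a neighborhood `U` of the diagonal of `ℂ²`, bianalytic in `z` and bianalytic in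
`conj w`, and `F(z,w) = (z-w)² G(z,w)` for some `G` which is bianalytic in `z` and smooth,
then `F` vanishes on a neighborhood of the diagonal. -/
theorem diagonal_uniqueness_bianalytic
    (U : Set (ℂ × ℂ)) (F : ℂ → ℂ → ℂ)
    (hU : IsOpen U) (hdiag : ∀ z : ℂ, (z, z) ∈ U)
    (hFsm : ContDiffOn ℝ (⊤ : ℕ∞) (fun p : ℂ × ℂ => F p.1 p.2) U)
    (hFz : ∀ p ∈ U, dbar (fun ζ => dbar (fun ξ => F ξ p.2) ζ) p.1 = 0)
    (hFw : ∀ p ∈ U, pdz (fun η => pdz (fun ξ => F p.1 ξ) η) p.2 = 0)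
    (hG : ∃ G : ℂ → ℂ → ℂ,
        ContDiffOn ℝ (⊤ : ℕ∞) (fun p : ℂ × ℂ => G p.1 p.2) U ∧
        (∀ p ∈ U, dbar (fun ζ => dbar (fun ξ => G ξ p.2) ζ) p.1 = 0) ∧
        ∀ p ∈ U, F p.1 p.2 = (p.1 - p.2) ^ 2 * G p.1 p.2) :
    ∃ V : Set (ℂ × ℂ), IsOpen V ∧ (∀ z : ℂ, (z, z) ∈ V) ∧ V ⊆ U ∧
      ∀ p ∈ V, F p.1 p.2 = 0 := by
  obtain ⟨G, hGsm, -, hFG⟩ := hG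
  choose r hr hrU using fun z => Metric.isOpen_iff.mp hU (z, z) (hdiag z)
  refine ⟨⋃ z, ball (z, z) (r z), isOpen_iUnion fun _ => isOpen_ball,
    fun z => Set.mem_iUnion.2 ⟨z, mem_ball_self (hr z)⟩, Set.iUnion_subset hrU, ?_⟩
  intro p hp
  obtain ⟨z, hz⟩ := Set.mem_iUnion.1 hp
  rw [← ball_prod_same] at hz
  have hsub : ball z (r z) ×ˢ ball z (r z) ⊆ U := by
    rw [ball_prod_same]
    exact hrU z
  have hF4 : ContDiffOn ℝ 4 (fun p : ℂ × ℂ => F p.1 p.2) U :=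
    hFsm.of_le (WithTop.coe_le_coe.2 le_top)
  have hF2 : ContDiffOn ℝ 2 (fun p : ℂ × ℂ => F p.1 p.2) U := hF4.of_le (by norm_num)
  have hG2 : ContDiffOn ℝ 2 (fun p : ℂ × ℂ => G p.1 p.2) U :=
    hGsm.of_le (WithTop.coe_le_coe.2 le_top)
  exact eq_zero_on_prod_of_eq_sub_sq_mul isOpen_ball (convex_ball z (r z))
    (hF4.mono hsub) (hG2.mono hsub)
    (fun q hq => (dbar_dbar_comp_mk_left hU hF2 (hsub hq)).symm.trans (hFz q (hsub hq)))
    (fun q hq => (pdz_pdz_comp_mk_right hU hF2 (hsub hq)).symm.trans (hFw q (hsub hq)))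
    (fun q hq => hFG q (hsub hq)) p hz
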